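/- (Coercivity on the locally finite graph domain) Under (A)' and (H₃), the functional φ_Ω(u,v) = (1/p)∫_{Ω∪∂Ω}|∇^{m₁}u|^p dμ + (1/q)∫_{Ω∪∂Ω}|∇^{m₂}v|^q dμ − ∫_Ω F(x,u,v)dμ is coercive on W = W₀^{m₁,p}(Ω) × W₀^{m₂,q}(Ω). -/

import Mathlib

open Finset

/-!
Integrating the growth bounds on `∂ₛF` and `∂ₜF` from the origin, and splitting the mixed term
`|s| |t|^{(pq-q)/p}` by Young's inequality with exponents `p` and `p/(p-1)`, gives
`F(x,s,t) ≤ F(x,0,0) + A/p |s|^p + B/q |t|^q` with `A = ‖f₁‖_∞ + ‖f₂‖_∞` and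
`B = ((pq-q)/p)‖f₂‖_∞ + ‖f₄‖_∞`. Summing over `Ω` and using the Sobolev embeddings,
`φ_Ω(u,v) ≥ (1 - A C₁^p)/p ‖u‖^p + (1 - B C₂^q)/q ‖v‖^q`, and (H₃) says exactly that both
coefficients are positive.
-/

-- The mean value theorem would lose the factor `1/p`, which (H₃) cannot afford.
lemma abs_sub_le_of_abs_deriv_le_rpow_of_nonneg {g : ℝ → ℝ} (hg : Differentiable ℝ g)
    {A B p s : ℝ} (hp : 1 ≤ p) (hs : 0 ≤ s)
    (hbound : ∀ r ∈ Set.Icc 0 s, |deriv g r| ≤ A * r ^ (p - 1) + B) :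
    |g s - g 0| ≤ A * s ^ p / p + B * s := by
  have hp₀ : p ≠ 0 := by positivity
  have hH : ∀ r : ℝ, HasDerivAt (fun r => A * r ^ p / p + B * r) (A * r ^ (p - 1) + B) r := by
    intro r
    have h := (((Real.hasDerivAt_rpow_const (Or.inr hp)).const_mul A).div_const p).add
      ((hasDerivAt_id r).const_mul B)
    rwa [show A * (p * r ^ (p - 1)) / p + B * 1 = A * r ^ (p - 1) + B by field_simp] at h
  have key := image_norm_le_of_norm_deriv_right_le_deriv_boundary (f := fun r => g r - g 0)
    (a := 0) (b := s) (hg.continuous.sub continuous_const).continuousOn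
    (fun r _ => ((hg r).hasDerivAt.sub_const (g 0)).hasDerivWithinAt)
    (by simp [Real.zero_rpow hp₀]) hH (fun r hr => hbound r (Set.Ico_subset_Icc_self hr))
    ⟨hs, le_rfl⟩
  simpa [Real.norm_eq_abs] using key

lemma abs_sub_le_of_abs_deriv_le_rpow {g : ℝ → ℝ} (hg : Differentiable ℝ g) {A B p : ℝ}
    (hp : 1 ≤ p) (hbound : ∀ r, |deriv g r| ≤ A * |r| ^ (p - 1) + B) (s : ℝ) :
    |g s - g 0| ≤ A * |s| ^ p / p + B * |s| := by
  rcases le_total 0 s with hs | hs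
  · rw [abs_of_nonneg hs]
    refine abs_sub_le_of_abs_deriv_le_rpow_of_nonneg hg hp hs fun r hr => ?_
    simpa [abs_of_nonneg hr.1] using hbound r
  · have key := abs_sub_le_of_abs_deriv_le_rpow_of_nonneg (g := fun r => g (-r))
      (hg.comp differentiable_neg) hp (neg_nonneg.2 hs) fun r hr => by
        simpa [deriv_comp_neg, abs_of_nonneg hr.1] using hbound (-r)
    simpa [abs_of_nonpos hs] using key

lemma mul_rpow_le_young {a b p q : ℝ} (ha : 0 ≤ a) (hb : 0 ≤ b) (hp : 1 < p) :
    a * b ^ ((p * q - q) / p) ≤ a ^ p / p + (p - 1) / p * b ^ q := by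
  have hconj : p.HolderConjugate (p / (p - 1)) :=
    (Real.holderConjugate_iff_eq_conjExponent hp).2 rfl
  have hp₀ : p ≠ 0 := by positivity
  have hp₁ : p - 1 ≠ 0 := sub_ne_zero.2 hp.ne'
  have hexp : (p * q - q) / p * (p / (p - 1)) = q := by field_simp
  calc a * b ^ ((p * q - q) / p)
      ≤ a ^ p / p + (b ^ ((p * q - q) / p)) ^ (p / (p - 1)) / (p / (p - 1)) :=
        Real.young_inequality_of_nonneg ha (Real.rpow_nonneg hb _) hconj
    _ = a ^ p / p + (p - 1) / p * b ^ q := by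
        rw [← Real.rpow_mul hb, hexp]
        field_simp

lemma le_add_rpow_of_abs_deriv_le {Φ : ℝ → ℝ → ℝ}
    (hΦs : ∀ t, Differentiable ℝ fun s => Φ s t) (hΦt : Differentiable ℝ fun t => Φ 0 t)
    {p q a₁ a₂ a₄ : ℝ} (hp : 1 < p) (hq : 1 ≤ q) (ha₂ : 0 ≤ a₂)
    (hs : ∀ s t, |deriv (fun s' => Φ s' t) s| ≤
      a₁ * |s| ^ (p - 1) + a₂ * |t| ^ ((p * q - q) / p))
    (ht : ∀ t, |deriv (fun t' => Φ 0 t') t| ≤ a₄ * |t| ^ (q - 1)) (s t : ℝ) :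
    Φ s t ≤ Φ 0 0 + (a₁ + a₂) / p * |s| ^ p + ((p * q - q) / p * a₂ + a₄) / q * |t| ^ q := by
  have hp₀ : p ≠ 0 := by positivity
  have hq₀ : q ≠ 0 := by positivity
  have hstep_s := abs_sub_le_of_abs_deriv_le_rpow (hΦs t) hp.le (hs · t) s
  have hstep_t := abs_sub_le_of_abs_deriv_le_rpow hΦt hq (B := 0) (by simpa using ht) t
  have hyoung := mul_le_mul_of_nonneg_left
    (mul_rpow_le_young (q := q) (abs_nonneg s) (abs_nonneg t) hp) ha₂
  have hcoeff : (a₁ + a₂) / p * |s| ^ p + ((p * q - q) / p * a₂ + a₄) / q * |t| ^ q =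
      a₁ * |s| ^ p / p + a₂ * (|s| ^ p / p + (p - 1) / p * |t| ^ q) + a₄ * |t| ^ q / q := by
    field_simp
    ring
  linarith [(abs_le.1 hstep_s).2, (abs_le.1 hstep_t).2]

lemma le_sup'_abs {ι : Type*} {s : Finset ι} (hs : s.Nonempty) (f : ι → ℝ) {i : ι}
    (hi : i ∈ s) : f i ≤ s.sup' hs fun j => |f j| :=
  (le_abs_self _).trans (le_sup' (fun j => |f j|) hi)

lemma sup'_abs_nonneg {ι : Type*} {s : Finset ι} (hs : s.Nonempty) (f : ι → ℝ) :
    0 ≤ s.sup' hs fun j => |f j| :=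
  let ⟨_, hi⟩ := hs
  (abs_nonneg _).trans (le_sup' (fun j => |f j|) hi)

lemma sum_mul_le_of_abs_deriv_le {V : Type*} {Ω : Finset V} (hΩ : Ω.Nonempty) {μ : V → ℝ}
    (hμ : ∀ x ∈ Ω, 0 ≤ μ x) {p q : ℝ} (hp : 1 < p) (hq : 1 < q) {F : V → ℝ → ℝ → ℝ}
    (hF : ∀ x ∈ Ω, Differentiable ℝ fun st : ℝ × ℝ => F x st.1 st.2) {f₁ f₂ f₃ f₄ : V → ℝ}
    (hFs : ∀ x ∈ Ω, ∀ s t : ℝ, |deriv (fun s' => F x s' t) s| ≤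
      f₁ x * |s| ^ (p - 1) + f₂ x * |t| ^ ((p * q - q) / p))
    (hFt : ∀ x ∈ Ω, ∀ s t : ℝ, |deriv (fun t' => F x s t') t| ≤
      f₃ x * |s| ^ ((p * q - p) / q) + f₄ x * |t| ^ (q - 1))
    (u v : V → ℝ) :
    ∑ x ∈ Ω, μ x * F x (u x) (v x) ≤ ∑ x ∈ Ω, μ x * F x 0 0 +
      ((Ω.sup' hΩ fun x => |f₁ x|) + (Ω.sup' hΩ fun x => |f₂ x|)) / p *
        ∑ x ∈ Ω, μ x * |u x| ^ p +
      ((p * q - q) / p * (Ω.sup' hΩ fun x => |f₂ x|) + (Ω.sup' hΩ fun x => |f₄ x|)) / q *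
        ∑ x ∈ Ω, μ x * |v x| ^ q := by
  have hβ : 0 < (p * q - p) / q := div_pos (by nlinarith) (by positivity)
  have hpoint : ∀ x ∈ Ω, F x (u x) (v x) ≤ F x 0 0 +
      ((Ω.sup' hΩ fun x => |f₁ x|) + (Ω.sup' hΩ fun x => |f₂ x|)) / p * |u x| ^ p +
      ((p * q - q) / p * (Ω.sup' hΩ fun x => |f₂ x|) + (Ω.sup' hΩ fun x => |f₄ x|)) / q *
        |v x| ^ q := by
    intro x hx
    refine le_add_rpow_of_abs_deriv_le
      (fun t => (hF x hx).comp (differentiable_id.prodMk (differentiable_const t)))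
      ((hF x hx).comp ((differentiable_const 0).prodMk differentiable_id)) hp hq.le
      (sup'_abs_nonneg hΩ f₂) (fun s t => (hFs x hx s t).trans ?_) (fun t => ?_) (u x) (v x)
    · gcongr <;> exact le_sup'_abs hΩ _ hx
    · have h := hFt x hx 0 t
      rw [abs_zero, Real.zero_rpow hβ.ne', mul_zero, zero_add] at h
      exact h.trans (by gcongr; exact le_sup'_abs hΩ _ hx)
  rw [mul_sum, mul_sum, ← sum_add_distrib, ← sum_add_distrib]
  exact sum_le_sum fun x hx => by
    linarith [mul_le_mul_of_nonneg_left (hpoint x hx) (hμ x hx)]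

lemma le_of_rpow_inv_le_mul_rpow_inv {U S C p : ℝ} (hU : 0 ≤ U) (hS : 0 ≤ S) (hC : 0 ≤ C)
    (hp : 0 < p) (h : U ^ (1 / p) ≤ C * S ^ (1 / p)) : U ≤ C ^ p * S := by
  have := Real.rpow_le_rpow (by positivity) h hp.le
  rwa [one_div, Real.rpow_inv_rpow hU hp.ne', Real.mul_rpow hC (by positivity),
    Real.rpow_inv_rpow hS hp.ne'] at this

lemma exists_le_mul_rpow_add_mul_rpow {K₁ K₂ p q : ℝ} (hK₁ : 0 < K₁) (hK₂ : 0 < K₂)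
    (hp : 1 ≤ p) (hq : 1 ≤ q) (M : ℝ) :
    ∃ R, ∀ x y : ℝ, 0 ≤ x → 0 ≤ y → R ≤ x + y → M ≤ K₁ * x ^ p + K₂ * y ^ q := by
  set K := min K₁ K₂
  have hK : 0 < K := lt_min hK₁ hK₂
  refine ⟨2 * max 1 (M / K), fun x y hx hy hxy => ?_⟩
  have hMK : M ≤ K * max 1 (M / K) := by
    rw [← div_le_iff₀' hK]; exact le_max_right _ _
  have hlarge : ∀ z K' r : ℝ, K ≤ K' → 1 ≤ r → max 1 (M / K) ≤ z → M ≤ K' * z ^ r := by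
    intro z K' r hK' hr hz
    have hK'₀ : 0 ≤ K' := hK.le.trans hK'
    have hz₁ : 1 ≤ z := (le_max_left _ _).trans hz
    calc M ≤ K * max 1 (M / K) := hMK
      _ ≤ K' * z := by gcongr
      _ ≤ K' * z ^ r := by
        gcongr
        simpa using Real.rpow_le_rpow_of_exponent_le hz₁ hr
  have hpos : 0 ≤ K₁ * x ^ p ∧ 0 ≤ K₂ * y ^ q := ⟨by positivity, by positivity⟩
  rcases le_total x y with h | h
  · linarith [hlarge y K₂ q (min_le_right K₁ K₂) hq (by linarith)]
  · linarith [hlarge x K₁ p (min_le_left K₁ K₂) hp (by linarith)]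

theorem dirichlet_energy_coercive_general {V : Type*} (μ : V → ℝ)
    (Ω S : Finset V) (hΩ : Ω.Nonempty)
    (hμ : ∀ x, 0 < μ x)
    (p q : ℝ) (hp : 1 < p) (hq : 1 < q)
    (G₁ G₂ : (V → ℝ) → V → ℝ)
    (hG₁ : ∀ u x, 0 ≤ G₁ u x) (hG₂ : ∀ v x, 0 ≤ G₂ v x)
    (N₁ N₂ : (V → ℝ) → ℝ)
    (hN₁ : ∀ u, N₁ u = (∑ x ∈ S, μ x * (G₁ u x) ^ p) ^ (1 / p))
    (hN₂ : ∀ v, N₂ v = (∑ x ∈ S, μ x * (G₂ v x) ^ q) ^ (1 / q))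
    (C₁ C₂ : ℝ) (hC₁ : 0 < C₁) (hC₂ : 0 < C₂)
    (hemb₁ : ∀ u : V → ℝ, (∑ x ∈ Ω, μ x * |u x| ^ p) ^ (1 / p) ≤ C₁ * N₁ u)
    (hemb₂ : ∀ v : V → ℝ, (∑ x ∈ Ω, μ x * |v x| ^ q) ^ (1 / q) ≤ C₂ * N₂ v)
    -- (A)': F(x,·,·) is C¹
    (F : V → ℝ → ℝ → ℝ)
    (hF : ∀ x, ContDiff ℝ 1 (fun st : ℝ × ℝ => F x st.1 st.2))
    -- (H₃)
    (f₁ f₂ f₃ f₄ : V → ℝ)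
    (h0 : ∑ x ∈ Ω, μ x * F x 0 0 = 0)
    (hFs : ∀ x ∈ Ω, ∀ s t : ℝ, |deriv (fun s' => F x s' t) s| ≤
      f₁ x * |s| ^ (p - 1) + f₂ x * |t| ^ ((p * q - q) / p))
    (hFt : ∀ x ∈ Ω, ∀ s t : ℝ, |deriv (fun t' => F x s t') t| ≤
      f₃ x * |s| ^ ((p * q - p) / q) + f₄ x * |t| ^ (q - 1))
    (hc₂ : (p * q - q) / p * (Ω.sup' hΩ fun x => |f₂ x|) + (Ω.sup' hΩ fun x => |f₄ x|) <
      1 / C₂ ^ q)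
    (hc₁ : (Ω.sup' hΩ fun x => |f₁ x|) + (Ω.sup' hΩ fun x => |f₂ x|) < 1 / C₁ ^ p) :
    ∀ M : ℝ, ∃ R : ℝ, ∀ u v : V → ℝ,
      (∀ x ∉ Ω, u x = 0) → (∀ x ∉ Ω, v x = 0) →
      R ≤ N₁ u + N₂ v →
      M ≤ (1 / p) * (∑ x ∈ S, μ x * (G₁ u x) ^ p) +
          (1 / q) * (∑ x ∈ S, μ x * (G₂ v x) ^ q) -
          ∑ x ∈ Ω, μ x * F x (u x) (v x) := by
  intro M
  have hp₀ : 0 < p := by linarith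
  have hq₀ : 0 < q := by linarith
  set A := (Ω.sup' hΩ fun x => |f₁ x|) + Ω.sup' hΩ fun x => |f₂ x|
  set B := (p * q - q) / p * (Ω.sup' hΩ fun x => |f₂ x|) + Ω.sup' hΩ fun x => |f₄ x|
  have hA : 0 ≤ A := add_nonneg (sup'_abs_nonneg hΩ f₁) (sup'_abs_nonneg hΩ f₂)
  have hB : 0 ≤ B := add_nonneg (mul_nonneg (div_nonneg (by nlinarith) hp₀.le)
    (sup'_abs_nonneg hΩ f₂)) (sup'_abs_nonneg hΩ f₄)
  have hK₁ : 0 < (1 - A * C₁ ^ p) / p :=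
    div_pos (by linarith [(lt_div_iff₀ (by positivity)).1 hc₁]) hp₀
  have hK₂ : 0 < (1 - B * C₂ ^ q) / q :=
    div_pos (by linarith [(lt_div_iff₀ (by positivity)).1 hc₂]) hq₀
  refine (exists_le_mul_rpow_add_mul_rpow hK₁ hK₂ hp.le hq.le M).imp
    fun R hR u v _ _ hRN => ?_
  set S₁ := ∑ x ∈ S, μ x * G₁ u x ^ p
  set S₂ := ∑ x ∈ S, μ x * G₂ v x ^ q
  have hS₁ : 0 ≤ S₁ := sum_nonneg fun x _ => by have := hμ x; have := hG₁ u x; positivity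
  have hS₂ : 0 ≤ S₂ := sum_nonneg fun x _ => by have := hμ x; have := hG₂ v x; positivity
  have hU := le_of_rpow_inv_le_mul_rpow_inv (sum_nonneg fun x _ => by have := hμ x; positivity)
    hS₁ hC₁.le hp₀ (hN₁ u ▸ hemb₁ u)
  have hW := le_of_rpow_inv_le_mul_rpow_inv (sum_nonneg fun x _ => by have := hμ x; positivity)
    hS₂ hC₂.le hq₀ (hN₂ v ▸ hemb₂ v)
  have hFuv := sum_mul_le_of_abs_deriv_le hΩ (fun x _ => (hμ x).le) hp hq
    (fun x _ => (hF x).differentiable one_ne_zero) hFs hFt u v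
  rw [h0, zero_add] at hFuv
  have hlower := hR (N₁ u) (N₂ v) (hN₁ u ▸ by positivity) (hN₂ v ▸ by positivity) hRN
  rw [hN₁, hN₂, one_div, one_div, Real.rpow_inv_rpow hS₁ hp₀.ne',
    Real.rpow_inv_rpow hS₂ hq₀.ne'] at hlower
  calc M ≤ (1 - A * C₁ ^ p) / p * S₁ + (1 - B * C₂ ^ q) / q * S₂ := hlower
    _ = 1 / p * S₁ + 1 / q * S₂ - (A / p * (C₁ ^ p * S₁) + B / q * (C₂ ^ q * S₂)) := by ring
    _ ≤ 1 / p * S₁ + 1 / q * S₂ - (A / p * ∑ x ∈ Ω, μ x * |u x| ^ p +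
        B / q * ∑ x ∈ Ω, μ x * |v x| ^ q) := by gcongr
    _ ≤ 1 / p * S₁ + 1 / q * S₂ - ∑ x ∈ Ω, μ x * F x (u x) (v x) := by gcongr

/-- Coercivity on the locally finite graph domain (Lemma 4.1): under (A)' and
(H₃), the functional
`φ_Ω(u,v) = (1/p)∫_{Ω∪∂Ω}|∇^{m₁}u|^p dμ + (1/q)∫_{Ω∪∂Ω}|∇^{m₂}v|^q dμ − ∫_Ω F(x,u,v)dμ`
is coercive on `W = W₀^{m₁,p}(Ω) × W₀^{m₂,q}(Ω)`. Here `G₁ u` and `G₂ v` denote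
the gradient lengths `|∇^{m₁}u|`, `|∇^{m₂}v|` on `S = Ω ∪ ∂Ω`, `N₁, N₂` are the
corresponding Sobolev norms, and `C₁, C₂` the Sobolev embedding constants into
`L^p(Ω)` and `L^q(Ω)`. -/
theorem dirichlet_energy_coercive {V : Type*} [DecidableEq V] (μ : V → ℝ)
    (Ω S : Finset V) (hΩS : Ω ⊆ S) (hΩ : Ω.Nonempty)
    (hμ : ∀ x, 0 < μ x)
    (p q : ℝ) (hp : 1 < p) (hq : 1 < q)
    (G₁ G₂ : (V → ℝ) → V → ℝ)
    (hG₁ : ∀ u x, 0 ≤ G₁ u x) (hG₂ : ∀ v x, 0 ≤ G₂ v x)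
    (N₁ N₂ : (V → ℝ) → ℝ)
    (hN₁ : ∀ u, N₁ u = (∑ x ∈ S, μ x * (G₁ u x) ^ p) ^ (1 / p))
    (hN₂ : ∀ v, N₂ v = (∑ x ∈ S, μ x * (G₂ v x) ^ q) ^ (1 / q))
    (C₁ C₂ : ℝ) (hC₁ : 0 < C₁) (hC₂ : 0 < C₂)
    (hemb₁ : ∀ u : V → ℝ, (∑ x ∈ Ω, μ x * |u x| ^ p) ^ (1 / p) ≤ C₁ * N₁ u)
    (hemb₂ : ∀ v : V → ℝ, (∑ x ∈ Ω, μ x * |v x| ^ q) ^ (1 / q) ≤ C₂ * N₂ v)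
    -- (A)': F(x,·,·) is C¹
    (F : V → ℝ → ℝ → ℝ)
    (hF : ∀ x, ContDiff ℝ 1 (fun st : ℝ × ℝ => F x st.1 st.2))
    -- (H₃)
    (f₁ f₂ f₃ f₄ : V → ℝ)
    (hf₁ : ∀ x, 0 ≤ f₁ x) (hf₂ : ∀ x, 0 ≤ f₂ x) (hf₃ : ∀ x, 0 ≤ f₃ x) (hf₄ : ∀ x, 0 ≤ f₄ x)
    (h0 : ∑ x ∈ Ω, μ x * F x 0 0 = 0)
    (hFs : ∀ x ∈ Ω, ∀ s t : ℝ, |deriv (fun s' => F x s' t) s| ≤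
      f₁ x * |s| ^ (p - 1) + f₂ x * |t| ^ ((p * q - q) / p))
    (hFt : ∀ x ∈ Ω, ∀ s t : ℝ, |deriv (fun t' => F x s t') t| ≤
      f₃ x * |s| ^ ((p * q - p) / q) + f₄ x * |t| ^ (q - 1))
    (hc₂ : (p * q - q) / p * (Ω.sup' hΩ fun x => |f₂ x|) + (Ω.sup' hΩ fun x => |f₄ x|) <
      1 / C₂ ^ q)
    (hc₁ : (Ω.sup' hΩ fun x => |f₁ x|) + (Ω.sup' hΩ fun x => |f₂ x|) < 1 / C₁ ^ p) :
    ∀ M : ℝ, ∃ R : ℝ, ∀ u v : V → ℝ,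
      (∀ x ∉ Ω, u x = 0) → (∀ x ∉ Ω, v x = 0) →
      R ≤ N₁ u + N₂ v →
      M ≤ (1 / p) * (∑ x ∈ S, μ x * (G₁ u x) ^ p) +
          (1 / q) * (∑ x ∈ S, μ x * (G₂ v x) ^ q) -
          ∑ x ∈ Ω, μ x * F x (u x) (v x) :=
  dirichlet_energy_coercive_general μ Ω S hΩ hμ p q hp hq G₁ G₂ hG₁ hG₂ N₁ N₂ hN₁ hN₂ C₁ C₂ hC₁ hC₂
    hemb₁ hemb₂ F hF f₁ f₂ f₃ f₄ h0 hFs hFt hc₂ hc₁
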